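/- arXiv:1004.4051 — 4 statements merged into one kernel-verified Lean document; each statement's English description precedes it below -/
import Mathlib

section
/- For every integer i > g, the integer r_i vanishes: r_i = 0. -/
/-!
Let `R(x) = ∑ r_j x^j`. Since `C(g-1+n, g-1)` is the coefficient of `x^n` in `(1-x)^(-g)`, the
recursion says `R(x) / (1-x)^g = ∑ (i^g - (i-1)^g) x^i`, i.e. `R(x) / (1-x)^(g+1) = ∑ i^g x^i`.
Multiplication by `1 - x` acts on coefficients as a forward difference, so `r_(m+g+1)` is the
`(g+1)`-st forward difference of `n ↦ n^g` at `m`, which vanishes because `n^g` has degree `g`.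
-/

open Finset Function fwdDiff

-- `Δ_[1] ^[n]` needs the space: `]^` is a token of the exterior power notation `⋀[R]^n`.

theorem fwdDiff_iter_comp_natCast {R G : Type*} [AddCommMonoidWithOne R] [AddCommGroup G]
    (f : R → G) (n i : ℕ) :
    Δ_[1] ^[n] (fun m : ℕ ↦ f m) i = Δ_[1] ^[n] f i := by
  simp [fwdDiff_iter_eq_sum_shift, nsmul_one]

/-- The coefficient of `x^i` in `(∑_{j ≥ 1} r j x^j) / (1-x)^(c+1)`. -/
def chooseConv (r : ℕ → ℤ) (c i : ℕ) : ℤ :=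
  ∑ j ∈ Icc 1 i, r j * ((c + (i - j)).choose c : ℤ)

theorem fwdDiff_chooseConv_succ (r : ℕ → ℤ) (c : ℕ) :
    Δ_[1] (chooseConv r (c + 1)) = fun i ↦ chooseConv r c (i + 1) := by
  ext i
  simp only [fwdDiff, chooseConv, sum_Icc_succ_top (Nat.le_add_left 1 i), Nat.sub_self,
    add_zero, Nat.choose_self, Nat.cast_one, mul_one]
  have pascal : ∀ j ∈ Icc 1 i, r j * ((c + 1 + (i + 1 - j)).choose (c + 1) : ℤ) =
      r j * (c + (i + 1 - j)).choose c + r j * (c + 1 + (i - j)).choose (c + 1) := by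
    intro j hj
    have hj : j ≤ i := (mem_Icc.mp hj).2
    rw [show c + 1 + (i + 1 - j) = c + (i + 1 - j) + 1 by omega, Nat.choose_succ_succ',
      show c + (i + 1 - j) = c + 1 + (i - j) by omega]
    push_cast
    ring
  rw [sum_congr rfl pascal, sum_add_distrib]
  ring

theorem fwdDiff_iter_chooseConv (r : ℕ → ℤ) (c k : ℕ) :
    Δ_[1] ^[k] (chooseConv r (c + k)) = fun i ↦ chooseConv r c (i + k) := by
  induction k generalizing c with
  | zero => rfl
  | succ k ih =>
    rw [iterate_succ_apply', ← add_assoc, add_right_comm, ih (c + 1)]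
    ext i
    rw [fwdDiff_comp_add, fwdDiff_chooseConv_succ]; rfl

theorem fwdDiff_iter_succ_chooseConv (r : ℕ → ℤ) (k : ℕ) :
    Δ_[1] ^[k + 1] (chooseConv r k) = fun i ↦ r (i + k + 1) := by
  ext i
  have h := fwdDiff_iter_chooseConv r 0 k
  rw [zero_add] at h
  rw [iterate_succ_apply', h]
  simp only [fwdDiff, chooseConv, zero_add, Nat.choose_zero_right, Nat.cast_one, mul_one]
  rw [add_right_comm i 1 k, sum_Icc_succ_top (Nat.le_add_left 1 _)]
  ring

theorem chooseConv_succ_of_recursion {r : ℕ → ℤ} {c : ℕ}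
    (hr : ∀ i : ℕ, 1 ≤ i →
      r i = (i : ℤ) ^ (c + 1) - ((i : ℤ) - 1) ^ (c + 1) -
        ∑ j ∈ Icc 1 (i - 1), r j * (Nat.choose (c + 1 + i - j - 1) (c + 1 - 1) : ℤ))
    (i : ℕ) : chooseConv r c (i + 1) = ((i : ℤ) + 1) ^ (c + 1) - (i : ℤ) ^ (c + 1) := by
  have hsum : ∑ j ∈ Icc 1 i, r j * ((c + 1 + (i + 1) - j - 1).choose c : ℤ) =
      ∑ j ∈ Icc 1 i, r j * ((c + (i + 1 - j)).choose c : ℤ) := by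
    refine sum_congr rfl fun j hj ↦ ?_
    have hj : j ≤ i := (mem_Icc.mp hj).2
    rw [show c + 1 + (i + 1) - j - 1 = c + (i + 1 - j) by omega]
  rw [chooseConv, sum_Icc_succ_top (Nat.le_add_left 1 i), hr (i + 1) (Nat.le_add_left 1 i)]
  simp only [Nat.add_sub_cancel, Nat.sub_self, add_zero, Nat.choose_self, Nat.cast_one,
    mul_one, hsum]
  push_cast
  ring

theorem chooseConv_eq_pow {r : ℕ → ℤ} {c : ℕ}
    (h : ∀ i : ℕ, chooseConv r c (i + 1) = ((i : ℤ) + 1) ^ (c + 1) - (i : ℤ) ^ (c + 1)) :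
    chooseConv r (c + 1) = fun i : ℕ ↦ (i : ℤ) ^ (c + 1) := by
  ext i
  induction i with
  | zero => simp [chooseConv]
  | succ i ih =>
    have hstep := congr_fun (fwdDiff_chooseConv_succ r c) i
    rw [fwdDiff, ih, h] at hstep
    push_cast
    linarith

/-- With `r` defined by the recursion
`r i = i^g - (i-1)^g - ∑_{j=1}^{i-1} r j * C(g+i-j-1, g-1)` (for `i ≥ 1`),
one has `r i = 0` for every `i > g`. -/
theorem r_eq_zero_of_gt (g : ℕ) (hg : 1 ≤ g) (r : ℕ → ℤ)
    (hr : ∀ i : ℕ, 1 ≤ i →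
      r i = (i : ℤ) ^ g - ((i : ℤ) - 1) ^ g -
        ∑ j ∈ Finset.Icc 1 (i - 1), r j * (Nat.choose (g + i - j - 1) (g - 1) : ℤ)) :
    ∀ i : ℕ, g < i → r i = 0 := by
  intro i hi
  obtain ⟨c, rfl⟩ : ∃ c, g = c + 1 := ⟨g - 1, by omega⟩
  obtain ⟨m, rfl⟩ : ∃ m, i = m + (c + 1) + 1 := ⟨i - (c + 1) - 1, by omega⟩
  have hdiff := congr_fun (fwdDiff_iter_succ_chooseConv r (c + 1)) m
  rw [chooseConv_eq_pow (chooseConv_succ_of_recursion hr)] at hdiff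
  rw [← hdiff, fwdDiff_iter_comp_natCast (fun x : ℤ ↦ x ^ (c + 1)),
    fwdDiff_iter_pow_eq_zero_of_lt (Nat.lt_succ_self _), Pi.zero_apply]
end

section
/- For every integer i with 1 ≤ i ≤ g, the integers r_i satisfy the symmetry r_i = r_{g+1−i}. -/
/-!
The recursion says that `R(t) = ∑ rᵢ tⁱ` satisfies `R(t) / (1 - t)^g = (1 - t) ∑ iᵍ tⁱ`, so
`R(t) = (1 - t)^(g+1) ∑ iᵍ tⁱ` and `rᵢ = ∑ₖ (-1)ᵏ C(g+1, k) (i - k)ᵍ` is an Eulerian number.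
Since the `(g+1)`-st finite difference of `x ↦ xᵍ` vanishes,
`∑_{k=0}^{g+1} (-1)ᵏ C(g+1, k) (i - k)ᵍ = 0`; splitting this sum at `k = i` and reflecting
`k ↦ g + 1 - k` in the second half shows that it equals `rᵢ - r_{g+1-i}`.
-/

open Finset PowerSeries

theorem PowerSeries.coeff_one_sub_X_pow {R : Type*} [CommRing R] (n k : ℕ) :
    coeff k ((1 - X : R⟦X⟧) ^ n) = (-1) ^ k * n.choose k := by
  have : (1 - X : R⟦X⟧) ^ n = rescale (-1 : R) ((1 + X) ^ n) := by
    simp [map_pow, sub_eq_add_neg]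
  rw [this, coeff_rescale, ← Polynomial.coe_X, ← Polynomial.coe_one, ← Polynomial.coe_add,
    ← Polynomial.coe_pow, Polynomial.coeff_coe, Polynomial.coeff_one_add_X_pow]

theorem neg_one_pow_sub_eq_mul {R : Type*} [CommMonoid R] [HasDistribNeg R] {n k : ℕ}
    (h : k ≤ n) : (-1 : R) ^ (n - k) = (-1) ^ n * (-1) ^ k := by
  obtain ⟨m, rfl⟩ := Nat.exists_eq_add_of_le h
  rw [Nat.add_sub_cancel_left, pow_add, mul_comm ((-1) ^ k), mul_assoc, ← mul_pow, neg_one_mul,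
    neg_neg, one_pow, mul_one]

theorem alternating_sum_choose_mul_sub_pow {R : Type*} [CommRing R] {g n : ℕ} (hgn : g < n)
    (x : R) : ∑ k ∈ range (n + 1), (-1) ^ k * n.choose k * (x - k) ^ g = 0 := by
  have h := fwdDiff_iter_eq_sum_shift (h := 1) (fun r : R ↦ r ^ g) n (x - n)
  rw [fwdDiff_iter_pow_eq_zero_of_lt hgn, Pi.zero_apply] at h
  rw [h, ← sum_range_reflect]
  refine sum_congr rfl fun k hk ↦ ?_
  have hk : k ≤ n := Nat.lt_succ_iff.mp (mem_range.mp hk)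
  rw [Nat.add_sub_cancel, Nat.choose_symm hk, Nat.cast_sub hk, zsmul_eq_mul]
  push_cast
  ring

theorem eq_of_eq_sub_sum_Icc {R : Type*} [Ring R] {a : ℕ → R} {c : ℕ → ℕ → R} {r s : ℕ → R}
    (hr : ∀ i, 1 ≤ i → r i = a i - ∑ j ∈ Icc 1 (i - 1), r j * c i j)
    (hs : ∀ i, 1 ≤ i → s i = a i - ∑ j ∈ Icc 1 (i - 1), s j * c i j) {i : ℕ} (hi : 1 ≤ i) :
    r i = s i := by
  induction i using Nat.strong_induction_on with
  | _ i ih =>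
    have earlier : ∑ j ∈ Icc 1 (i - 1), r j * c i j = ∑ j ∈ Icc 1 (i - 1), s j * c i j :=
      sum_congr rfl fun j hj ↦ by
        have hj := mem_Icc.mp hj
        rw [ih j (by omega) hj.1]
    rw [hr i hi, hs i hi, earlier]

/-- Shifted by one: `eulerian g (k + 1)` is the Eulerian number `A(g, k)`. -/
def eulerian (g i : ℕ) : ℤ :=
  ∑ k ∈ range (i + 1), (-1) ^ k * (g + 1).choose k * ((i : ℤ) - k) ^ g

theorem eulerian_zero {g : ℕ} (hg : 0 < g) : eulerian g 0 = 0 := by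
  simp [eulerian, hg.ne']

theorem eulerian_symm {g i : ℕ} (hg : 0 < g) (hi : i ≤ g + 1) :
    eulerian g i = eulerian g (g + 1 - i) := by
  have full := alternating_sum_choose_mul_sub_pow (Nat.lt_succ_self g) (i : ℤ)
  rw [← sum_range_add_sum_Ico _ (by omega : i ≤ g + 1 + 1)] at full
  have head : ∑ k ∈ range i, (-1) ^ k * ((g + 1).choose k : ℤ) * ((i : ℤ) - k) ^ g
      = eulerian g i := by
    rw [eulerian, sum_range_succ, sub_self, zero_pow hg.ne', mul_zero, add_zero]
  have tail : ∑ k ∈ Ico i (g + 1 + 1), (-1) ^ k * ((g + 1).choose k : ℤ) * ((i : ℤ) - k) ^ g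
      = -eulerian g (g + 1 - i) := by
    rw [sum_Ico_eq_sum_range, ← sum_range_reflect, eulerian,
      show g + 1 + 1 - i = g + 1 - i + 1 by omega, ← sum_neg_distrib]
    refine sum_congr rfl fun k hk ↦ ?_
    have hk : k ≤ g + 1 - i := Nat.lt_succ_iff.mp (mem_range.mp hk)
    rw [show i + (g + 1 - i + 1 - 1 - k) = g + 1 - k by omega, Nat.choose_symm (by omega),
      neg_one_pow_sub_eq_mul (by omega), Nat.cast_sub (by omega), Nat.cast_sub (by omega),
      show (i : ℤ) - (↑(g + 1) - k) = -1 * ((↑(g + 1) - i) - k) by ring, mul_pow]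
    have odd_sign : (-1 : ℤ) ^ (g + 1) * (-1) ^ g = -1 := by
      rw [← pow_add]
      exact Odd.neg_one_pow ⟨g, by ring⟩
    linear_combination ((-1) ^ k * ((g + 1).choose k : ℤ) * ((↑(g + 1) - i) - k) ^ g) * odd_sign
  linarith

theorem mk_eulerian (g : ℕ) :
    PowerSeries.mk (eulerian g) =
      (1 - X : ℤ⟦X⟧) ^ (g + 1) * PowerSeries.mk fun n ↦ (n : ℤ) ^ g := by
  ext i
  rw [coeff_mk, coeff_mul, Nat.sum_antidiagonal_eq_sum_range_succ_mk, eulerian]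
  refine sum_congr rfl fun k hk ↦ ?_
  rw [coeff_one_sub_X_pow, coeff_mk, Nat.cast_sub (Nat.lt_succ_iff.mp (mem_range.mp hk))]

theorem eulerian_eq_sub_sum_Icc {g i : ℕ} (hg : 0 < g) (hi : 1 ≤ i) :
    eulerian g i = (i : ℤ) ^ g - ((i : ℤ) - 1) ^ g -
      ∑ j ∈ Icc 1 (i - 1), eulerian g j * (Nat.choose (g + i - j - 1) (g - 1) : ℤ) := by
  have conv :
      PowerSeries.mk (eulerian g) * PowerSeries.mk (fun n ↦ ((g - 1 + n).choose (g - 1) : ℤ)) =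
        (1 - X) * PowerSeries.mk fun n ↦ (n : ℤ) ^ g := by
    rw [← invOneSubPow_val_eq_mk_sub_one_add_choose_of_pos ℤ g hg, mk_eulerian, mul_right_comm,
      add_comm g 1, one_sub_pow_add_mul_invOneSubPow_val_eq_one_sub_pow, pow_one]
  obtain ⟨n, rfl⟩ : ∃ n, i = n + 1 := ⟨i - 1, by omega⟩
  have h := congrArg (coeff (n + 1)) conv
  rw [sub_mul, one_mul, map_sub, coeff_succ_X_mul, coeff_mk, coeff_mk, coeff_mul,
    Nat.sum_antidiagonal_eq_sum_range_succ_mk] at h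
  simp only [coeff_mk] at h
  rw [sum_range_succ, sum_range_succ', eulerian_zero hg, zero_mul, add_zero, Nat.sub_self,
    add_zero, Nat.choose_self, Nat.cast_one, mul_one] at h
  have reindex :
      ∑ j ∈ Icc 1 (n + 1 - 1), eulerian g j * ((g + (n + 1) - j - 1).choose (g - 1) : ℤ) =
        ∑ k ∈ range n, eulerian g (k + 1) * ((g - 1 + (n + 1 - (k + 1))).choose (g - 1) : ℤ) := by
    rw [Nat.add_sub_cancel, ← Ico_add_one_right_eq_Icc, sum_Ico_eq_sum_range, Nat.add_sub_cancel]
    refine sum_congr rfl fun k hk ↦ ?_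
    have hk : k < n := mem_range.mp hk
    rw [add_comm 1 k, show g + (n + 1) - (k + 1) - 1 = g - 1 + (n + 1 - (k + 1)) by omega]
  rw [reindex]
  push_cast at h ⊢
  linear_combination h

theorem r_symm_general (g : ℕ) (r : ℕ → ℤ)
    (hr : ∀ i : ℕ, 1 ≤ i →
      r i = (i : ℤ) ^ g - ((i : ℤ) - 1) ^ g -
        ∑ j ∈ Finset.Icc 1 (i - 1), r j * (Nat.choose (g + i - j - 1) (g - 1) : ℤ)) :
    ∀ i : ℕ, 1 ≤ i → i ≤ g → r i = r (g + 1 - i) := by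
  intro i hi hig
  have r_eq_eulerian : ∀ j, 1 ≤ j → r j = eulerian g j := fun j hj ↦
    eq_of_eq_sub_sum_Icc hr (fun k hk ↦ eulerian_eq_sub_sum_Icc (by omega) hk) hj
  rw [r_eq_eulerian i hi, r_eq_eulerian (g + 1 - i) (by omega),
    eulerian_symm (by omega) (by omega)]

/-- With `r` defined by the recursion
`r i = i^g - (i-1)^g - ∑_{j=1}^{i-1} r j * C(g+i-j-1, g-1)` (for `i ≥ 1`),
one has the symmetry `r i = r (g+1-i)` for `1 ≤ i ≤ g`. -/
theorem r_symm (g : ℕ) (hg : 1 ≤ g) (r : ℕ → ℤ)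
    (hr : ∀ i : ℕ, 1 ≤ i →
      r i = (i : ℤ) ^ g - ((i : ℤ) - 1) ^ g -
        ∑ j ∈ Finset.Icc 1 (i - 1), r j * (Nat.choose (g + i - j - 1) (g - 1) : ℤ)) :
    ∀ i : ℕ, 1 ≤ i → i ≤ g → r i = r (g + 1 - i) :=
  r_symm_general g r hr
end

section
/- The sum of the integers r_1, …, r_g equals g factorial: ∑_{i=1}^g r_i = g!. -/
/-!
By Pascal's rule the recursion telescopes to `n ^ g = ∑_{1 ≤ j ≤ n} r j * C(g + n - j, g)` for
every `n`. For `n ≤ g` the terms with `n < j ≤ g` vanish, so on `0, …, g` the function `n ↦ n ^ g`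
agrees with `n ↦ ∑_{1 ≤ j ≤ g} r j * C(n + g - j, g)`. The `g`-th forward difference at `0` only
sees these values; it is `g!` on the left, and `∑ r j` on the right because `Δ^g C(· + c, g) = 1`.
-/

open Finset Nat

section fwdDiff

variable {M M' G : Type*} [AddCommMonoid M] [AddCommMonoid M'] [AddCommGroup G]

lemma fwdDiff_iter_comp_addMonoidHom (ψ : M →+ M') (h : M) (f : M' → G) (n : ℕ) (y : M) :
    (fwdDiff h)^[n] (f ∘ ψ) y = (fwdDiff (ψ h))^[n] f (ψ y) := by
  simp [fwdDiff_iter_eq_sum_shift]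

lemma fwdDiff_iter_congr {f f' : M → G} (h : M) (n : ℕ) (y : M)
    (hf : ∀ k ≤ n, f (y + k • h) = f' (y + k • h)) :
    (fwdDiff h)^[n] f y = (fwdDiff h)^[n] f' y := by
  rw [fwdDiff_iter_eq_sum_shift, fwdDiff_iter_eq_sum_shift]
  exact sum_congr rfl fun k hk => by rw [hf k (Nat.lt_succ_iff.mp (mem_range.mp hk))]

end fwdDiff

lemma fwdDiff_iter_natCast_pow_self {R : Type*} [CommRing R] (n : ℕ) :
    (fwdDiff 1)^[n] (fun x : ℕ => (x : R) ^ n) 0 = n ! := by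
  have := fwdDiff_iter_comp_addMonoidHom (Nat.castAddMonoidHom R) 1 (fun r : R => r ^ n) n 0
  simp only [Nat.coe_castAddMonoidHom, map_zero, Nat.cast_one, fwdDiff_iter_eq_factorial] at this
  exact this

lemma fwdDiff_iter_choose_add_self (g c : ℕ) :
    (fwdDiff 1)^[g] (fun x : ℕ => ((x + c).choose g : ℤ)) 0 = 1 := by
  rw [fwdDiff_iter_comp_add 1 (fun x : ℕ => (x.choose g : ℤ))]
  simpa using congr_fun (fwdDiff_iter_choose 0 g) c

lemma fwdDiff_iter_sum_smul_choose_add {ι : Type*} (s : Finset ι) (a : ι → ℤ) (c : ι → ℕ)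
    (g : ℕ) :
    (fwdDiff 1)^[g] (∑ i ∈ s, a i • fun x : ℕ => ((x + c i).choose g : ℤ)) 0 = ∑ i ∈ s, a i := by
  simp only [fwdDiff_iter_finsetSum, fwdDiff_iter_const_smul, Finset.sum_apply, Pi.smul_apply,
    fwdDiff_iter_choose_add_self, smul_eq_mul, mul_one]

lemma pow_eq_sum_mul_choose (g : ℕ) (hg : 1 ≤ g) (r : ℕ → ℤ)
    (hr : ∀ i : ℕ, 1 ≤ i →
      r i = (i : ℤ) ^ g - ((i : ℤ) - 1) ^ g -
        ∑ j ∈ Finset.Icc 1 (i - 1), r j * (Nat.choose (g + i - j - 1) (g - 1) : ℤ))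
    (n : ℕ) : (n : ℤ) ^ g = ∑ j ∈ Icc 1 n, r j * ((g + n - j).choose g : ℤ) := by
  obtain ⟨g, rfl⟩ := Nat.exists_eq_add_of_le' hg
  induction n with
  | zero => simp
  | succ n ih =>
    have pascal : ∀ j ∈ Icc 1 n, (((g + 1) + (n + 1) - j).choose (g + 1) : ℤ) =
        ((g + 1 + n - j).choose (g + 1) : ℤ) + ((g + 1 + (n + 1) - j - 1).choose g : ℤ) := by
      intro j hj
      rw [mem_Icc] at hj
      rw [show g + 1 + (n + 1) - j = (g + 1 + n - j) + 1 by omega,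
        show g + 1 + n - j + 1 - 1 = g + 1 + n - j by omega, Nat.choose_succ_succ', Nat.cast_add,
        add_comm]
    rw [sum_Icc_succ_top (by omega), sum_congr rfl fun j hj => by rw [pascal j hj, mul_add],
      sum_add_distrib, ← ih, hr (n + 1) (by omega)]
    simp

lemma sum_Icc_mul_choose_eq_of_le (r : ℕ → ℤ) {g n : ℕ} (hn : n ≤ g) :
    ∑ j ∈ Icc 1 n, r j * ((g + n - j).choose g : ℤ) =
      ∑ j ∈ Icc 1 g, r j * ((n + (g - j)).choose g : ℤ) := by
  refine sum_subset_zero_on_sdiff (Icc_subset_Icc_right hn) (fun j hj => ?_) (fun j hj => ?_)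
  · simp only [mem_sdiff, mem_Icc] at hj
    rw [Nat.choose_eq_zero_of_lt (by omega), Nat.cast_zero, mul_zero]
  · rw [mem_Icc] at hj
    rw [show g + n - j = n + (g - j) by omega]

/-- With `r` defined by the recursion
`r i = i^g - (i-1)^g - ∑_{j=1}^{i-1} r j * C(g+i-j-1, g-1)` (for `i ≥ 1`),
the sum `r 1 + ⋯ + r g` equals `g!`. -/
theorem r_sum_eq_factorial (g : ℕ) (hg : 1 ≤ g) (r : ℕ → ℤ)
    (hr : ∀ i : ℕ, 1 ≤ i →
      r i = (i : ℤ) ^ g - ((i : ℤ) - 1) ^ g -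
        ∑ j ∈ Finset.Icc 1 (i - 1), r j * (Nat.choose (g + i - j - 1) (g - 1) : ℤ)) :
    ∑ i ∈ Finset.Icc 1 g, r i = (Nat.factorial g : ℤ) := by
  have pow_eq_on_range : ∀ k ≤ g,
      (k : ℤ) ^ g = (∑ j ∈ Icc 1 g, r j • fun x : ℕ => ((x + (g - j)).choose g : ℤ)) k := by
    intro k hk
    rw [pow_eq_sum_mul_choose g hg r hr, sum_Icc_mul_choose_eq_of_le r hk]
    simp only [Finset.sum_apply, Pi.smul_apply, smul_eq_mul]
  calc ∑ i ∈ Icc 1 g, r i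
      = (fwdDiff 1)^[g] (∑ j ∈ Icc 1 g, r j • fun x : ℕ => ((x + (g - j)).choose g : ℤ)) 0 :=
        (fwdDiff_iter_sum_smul_choose_add _ _ _ g).symm
    _ = (fwdDiff 1)^[g] (fun x : ℕ => (x : ℤ) ^ g) 0 :=
        fwdDiff_iter_congr 1 g 0 fun k hk => by simpa using (pow_eq_on_range k hk).symm
    _ = g ! := fwdDiff_iter_natCast_pow_self g
end

section
/- Fix an integer N ≥ 1, a ∈ ℤ^g and c ∈ ℂ^g. Then for all m, n ∈ ℤ^g and every z ∈ ℂ^g with θ(z) ≠ 0, the function F(z) = f_{N,a}(z + c/N) / θ(z)^N satisfies the multiplier equation F(z + m + Ωn) = exp(−2πi nᵀc) · F(z). (This is the equation (Lc) of the paper: the functions f_{N,a}(z + c/N)/θ(z)^N are meromorphic sections of the flat line bundle ℒ_c with poles only on the theta divisor.) -/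
open Matrix

open scoped Matrix

/-- The Riemann theta function with characteristic `(a,b)`:
`θ_{a,b}(z,Ω) = ∑_{n∈ℤ^g} exp(πi (n+a)ᵀΩ(n+a) + 2πi (n+a)ᵀ(z+b))`. -/
noncomputable def riemannThetaChar {g : ℕ} (Ω : Matrix (Fin g) (Fin g) ℂ)
    (a b : Fin g → ℝ) (z : Fin g → ℂ) : ℂ :=
  ∑' n : Fin g → ℤ,
    Complex.exp ((Real.pi : ℂ) * Complex.I *
        ((fun i => (n i : ℂ) + (a i : ℂ)) ⬝ᵥ
          Ω.mulVec (fun i => (n i : ℂ) + (a i : ℂ))) +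
      2 * (Real.pi : ℂ) * Complex.I *
        ((fun i => (n i : ℂ) + (a i : ℂ)) ⬝ᵥ (fun i => z i + (b i : ℂ))))

/-- `f_{N,a}(z) = θ_{a/N,0}(Nz, NΩ)`. -/
noncomputable def fTheta {g : ℕ} (Ω : Matrix (Fin g) (Fin g) ℂ) (N : ℕ)
    (a : Fin g → ℤ) (z : Fin g → ℂ) : ℂ :=
  riemannThetaChar ((N : ℂ) • Ω) (fun i => (a i : ℝ) / (N : ℝ)) 0
    (fun i => (N : ℂ) * z i)

lemma symmDot {g : ℕ} {Ω : Matrix (Fin g) (Fin g) ℂ} (h : Ω.IsSymm) (x y : Fin g → ℂ) :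
    x ⬝ᵥ Ω.mulVec y = y ⬝ᵥ Ω.mulVec x := by
  rw [Matrix.dotProduct_mulVec, ← Matrix.vecMul_transpose, h.eq, dotProduct_comm]

lemma theta_shift {g : ℕ} (Ω : Matrix (Fin g) (Fin g) ℂ) (hΩ : Ω.IsSymm)
    (a b : Fin g → ℝ) (p q : Fin g → ℤ) (w : Fin g → ℂ) :
    riemannThetaChar Ω a b
        (fun i => w i + Ω.mulVec (fun l => (p l : ℂ)) i + (q i : ℂ)) =
      Complex.exp (2 * (Real.pi : ℂ) * Complex.I *
            ((fun i => (a i : ℂ)) ⬝ᵥ (fun i => (q i : ℂ)))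
          - (Real.pi : ℂ) * Complex.I *
            ((fun i => (p i : ℂ)) ⬝ᵥ Ω.mulVec (fun i => (p i : ℂ)))
          - 2 * (Real.pi : ℂ) * Complex.I *
            ((fun i => (p i : ℂ)) ⬝ᵥ (fun i => w i + (b i : ℂ)))) *
      riemannThetaChar Ω a b w := by
  unfold riemannThetaChar
  conv_rhs => rw [← (Equiv.addRight p).tsum_eq, ← tsum_mul_left]
  refine tsum_congr fun k => ?_
  rw [← Complex.exp_add]
  refine (Complex.exp_eq_exp_iff_exists_int.mpr ⟨k ⬝ᵥ q, ?_⟩)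
  have hkq : ((k ⬝ᵥ q : ℤ) : ℂ) =
      (fun i => (k i : ℂ)) ⬝ᵥ (fun i => (q i : ℂ)) := by
    simp [dotProduct]
  simp only [Equiv.coe_addRight, Pi.add_apply, Int.cast_add, hkq]
  have hv1 : (fun i => ((k i : ℂ) + (p i : ℂ)) + (a i : ℂ)) =
      ((fun i => (k i : ℂ)) + (fun i => (p i : ℂ))) + (fun i => ((a i : ℝ) : ℂ)) := rfl
  have hv2 : (fun i => (k i : ℂ) + (a i : ℂ)) =
      (fun i => (k i : ℂ)) + (fun i => ((a i : ℝ) : ℂ)) := rfl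
  have hv3 : (fun i => (w i + Ω.mulVec (fun l => (p l : ℂ)) i + (q i : ℂ)) + (b i : ℂ)) =
      w + Ω.mulVec (fun i => (p i : ℂ)) + (fun i => (q i : ℂ)) + (fun i => ((b i : ℝ) : ℂ)) := rfl
  have hv4 : (fun i => w i + (b i : ℂ)) =
      w + (fun i => ((b i : ℝ) : ℂ)) := rfl
  rw [hv1, hv2, hv3, hv4]
  simp only [Matrix.mulVec_add, add_dotProduct, dotProduct_add]
  rw [symmDot hΩ (fun i => (p i : ℂ)) (fun i => (k i : ℂ)),
      symmDot hΩ (fun i => (p i : ℂ)) (fun i => ((a i : ℝ) : ℂ))]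
  ring

/-- The function `F(z) = f_{N,a}(z + c/N) / θ(z)^N` satisfies the
multiplier equation `F(z + m + Ωn) = exp(−2πi nᵀc) F(z)` for all `m, n ∈ ℤ^g`
and all `z` with `θ(z) ≠ 0`. -/
theorem section_multiplier (g : ℕ) (hg : 1 ≤ g)
    (Ω : Matrix (Fin g) (Fin g) ℂ) (hΩsymm : Ω.IsSymm)
    (hΩpos : (Matrix.of fun i j => (Ω i j).im : Matrix (Fin g) (Fin g) ℝ).PosDef)
    (N : ℕ) (hN : 1 ≤ N) (a : Fin g → ℤ) (c : Fin g → ℂ)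
    (F : (Fin g → ℂ) → ℂ)
    (hF : ∀ z : Fin g → ℂ,
      F z = fTheta Ω N a (fun i => z i + c i / (N : ℂ)) /
        (riemannThetaChar Ω 0 0 z) ^ N)
    (m n : Fin g → ℤ) (z : Fin g → ℂ) (hz : riemannThetaChar Ω 0 0 z ≠ 0) :
    F (fun i => z i + (m i : ℂ) + Ω.mulVec (fun l => (n l : ℂ)) i) =
      Complex.exp (-(2 * (Real.pi : ℂ) * Complex.I *
        ((fun i => (n i : ℂ)) ⬝ᵥ c))) * F z := by
  have hNC : (N : ℂ) ≠ 0 := Nat.cast_ne_zero.mpr (by omega)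
  have hNR : (N : ℝ) ≠ 0 := Nat.cast_ne_zero.mpr (by omega)
  simp only [hF, fTheta]
  -- numerator
  have hnum := theta_shift ((N : ℂ) • Ω) (hΩsymm.smul _)
      (fun i => (a i : ℝ) / (N : ℝ)) 0 n (fun i => (N : ℤ) * m i)
      (fun i => (N : ℂ) * (z i + c i / (N : ℂ)))
  rw [show (fun i => (N : ℂ) * (z i + c i / (N : ℂ)) +
        ((N : ℂ) • Ω).mulVec (fun l => (n l : ℂ)) i + (((N : ℤ) * m i : ℤ) : ℂ)) =
      (fun i => (N : ℂ) * (z i + (m i : ℂ) + Ω.mulVec (fun l => (n l : ℂ)) i + c i / (N : ℂ)))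
    from funext fun i => by
      rw [Matrix.smul_mulVec, Pi.smul_apply, smul_eq_mul]; push_cast; ring] at hnum
  -- denominator
  have hden := theta_shift Ω hΩsymm 0 0 n m z
  rw [show (fun i => z i + Ω.mulVec (fun l => (n l : ℂ)) i + (m i : ℂ)) =
      (fun i => z i + (m i : ℂ) + Ω.mulVec (fun l => (n l : ℂ)) i)
    from funext fun i => by ring] at hden
  rw [hnum, hden, mul_pow, ← Complex.exp_nat_mul]
  -- the exponential factor identity
  have h1 : (fun i => (((fun i => (a i : ℝ) / (N : ℝ)) i : ℝ) : ℂ)) ⬝ᵥ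
      (fun i => (((N : ℤ) * m i : ℤ) : ℂ)) = ((a ⬝ᵥ m : ℤ) : ℂ) := by
    simp only [dotProduct]
    push_cast
    refine Finset.sum_congr rfl fun i _ => ?_
    field_simp
  have h2 : (fun i => (n i : ℂ)) ⬝ᵥ ((N : ℂ) • Ω).mulVec (fun i => (n i : ℂ)) =
      (N : ℂ) * ((fun i => (n i : ℂ)) ⬝ᵥ Ω.mulVec (fun i => (n i : ℂ))) := by
    rw [Matrix.smul_mulVec, dotProduct_smul, smul_eq_mul]
  have h3 : (fun i => (n i : ℂ)) ⬝ᵥ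
      (fun i => (N : ℂ) * (z i + c i / (N : ℂ)) + (((0 : Fin g → ℝ) i : ℝ) : ℂ)) =
      (N : ℂ) * ((fun i => (n i : ℂ)) ⬝ᵥ (fun i => z i + (((0 : Fin g → ℝ) i : ℝ) : ℂ))) +
      (fun i => (n i : ℂ)) ⬝ᵥ c := by
    simp only [dotProduct, Pi.zero_apply, Complex.ofReal_zero, add_zero,
      Finset.mul_sum, ← Finset.sum_add_distrib]
    refine Finset.sum_congr rfl fun i _ => ?_
    field_simp
  have h4 : (fun i => (((0 : Fin g → ℝ) i : ℝ) : ℂ)) ⬝ᵥ (fun i => (m i : ℂ)) = 0 := by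
    simp [dotProduct]
  have hfac : Complex.exp (2 * (Real.pi : ℂ) * Complex.I *
        ((fun i => (((fun i => (a i : ℝ) / (N : ℝ)) i : ℝ) : ℂ)) ⬝ᵥ
          (fun i => (((N : ℤ) * m i : ℤ) : ℂ)))
      - (Real.pi : ℂ) * Complex.I *
        ((fun i => (n i : ℂ)) ⬝ᵥ ((N : ℂ) • Ω).mulVec (fun i => (n i : ℂ)))
      - 2 * (Real.pi : ℂ) * Complex.I *
        ((fun i => (n i : ℂ)) ⬝ᵥ
          (fun i => (N : ℂ) * (z i + c i / (N : ℂ)) + (((0 : Fin g → ℝ) i : ℝ) : ℂ)))) =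
      Complex.exp (-(2 * (Real.pi : ℂ) * Complex.I * ((fun i => (n i : ℂ)) ⬝ᵥ c))) *
      Complex.exp ((N : ℂ) * (2 * (Real.pi : ℂ) * Complex.I *
        ((fun i => (((0 : Fin g → ℝ) i : ℝ) : ℂ)) ⬝ᵥ (fun i => (m i : ℂ)))
      - (Real.pi : ℂ) * Complex.I *
        ((fun i => (n i : ℂ)) ⬝ᵥ Ω.mulVec (fun i => (n i : ℂ)))
      - 2 * (Real.pi : ℂ) * Complex.I *
        ((fun i => (n i : ℂ)) ⬝ᵥ (fun i => z i + (((0 : Fin g → ℝ) i : ℝ) : ℂ))))) := by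
    rw [← Complex.exp_add]
    refine Complex.exp_eq_exp_iff_exists_int.mpr ⟨a ⬝ᵥ m, ?_⟩
    rw [h1, h2, h3, h4]
    ring
  rw [hfac]
  field_simp
end
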